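/- The 2D Stokeslet pressure field p(x) = (r·λ)/(2πρ²), with r = x − c and ρ = |r|, is harmonic on ℝ² \ {c}. -/

import Mathlib

open Real

/-!
On the horizontal and vertical lines through `x`, `2πp` has the form `u ↦ (l u + A) / (u² + B)`,
whose second derivative is `2 (l u³ - 3 l B u + 3 A u² - A B) / (u² + B)³`. With `(a, b) = x - c`
the two lines give `(u, l, A, B) = (a, λ₁, b λ₂, b²)` and `(b, λ₂, a λ₁, a²)`, and the two
numerators are negatives of each other.
-/

section LinearOverQuadratic

variable (l A B : ℝ)

theorem hasDerivAt_linear_div_sq_add {u : ℝ} (h : u ^ 2 + B ≠ 0) :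
    HasDerivAt (fun u => (l * u + A) / (u ^ 2 + B))
      ((l * B - 2 * A * u - l * u ^ 2) / (u ^ 2 + B) ^ 2) u := by
  have hnum : HasDerivAt (fun u => l * u + A) l u := by
    simpa using ((hasDerivAt_id u).const_mul l).add_const A
  have hden : HasDerivAt (fun u => u ^ 2 + B) (2 * u) u := by
    simpa using (hasDerivAt_pow 2 u).add_const B
  exact (hnum.fun_div hden h).congr_deriv (by ring)

theorem deriv_deriv_linear_div_sq_add {u : ℝ} (h : u ^ 2 + B ≠ 0) :
    deriv (deriv fun u => (l * u + A) / (u ^ 2 + B)) u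
      = 2 * (l * u ^ 3 - 3 * l * B * u + 3 * A * u ^ 2 - A * B) / (u ^ 2 + B) ^ 3 := by
  have hopen : IsOpen {u : ℝ | u ^ 2 + B ≠ 0} :=
    isOpen_ne_fun (by fun_prop) continuous_const
  have hderiv : deriv (fun u => (l * u + A) / (u ^ 2 + B))
      =ᶠ[nhds u] fun u => (l * B - 2 * A * u - l * u ^ 2) / (u ^ 2 + B) ^ 2 := by
    filter_upwards [hopen.mem_nhds h] with v hv
    exact (hasDerivAt_linear_div_sq_add l A B hv).deriv
  have hnum : HasDerivAt (fun u => l * B - 2 * A * u - l * u ^ 2) (-2 * A - 2 * l * u) u := by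
    refine ((((hasDerivAt_id' u).const_mul (2 * A)).const_sub (l * B)).fun_sub
      ((hasDerivAt_pow 2 u).const_mul l)).congr_deriv ?_
    norm_num
    ring
  have hden : HasDerivAt (fun u => (u ^ 2 + B) ^ 2) (2 * (u ^ 2 + B) * (2 * u)) u := by
    simpa using ((hasDerivAt_pow 2 u).add_const B).fun_pow 2
  rw [hderiv.deriv_eq, (hnum.fun_div hden (pow_ne_zero 2 h)).deriv]
  field_simp
  ring

end LinearOverQuadratic

theorem deriv_deriv_const_mul_comp_sub_const (f : ℝ → ℝ) (k a x : ℝ) :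
    deriv (fun s => deriv (fun t => k * f (t - a)) s) x = k * deriv (deriv f) (x - a) := by
  simp only [deriv_const_mul_field', deriv_comp_sub_const]

/-- The 2D Stokeslet pressure field `p(x) = (r·λ)/(2πρ²)`, with `r = x − c` and
`ρ = |r|`, is harmonic on `ℝ² \ {c}`: `∂₁₁p + ∂₂₂p = 0`. -/
theorem stokeslet_pressure_harmonic (c lam : ℝ × ℝ) (x : ℝ × ℝ) (hx : x ≠ c) :
    deriv (fun s : ℝ => deriv (fun s' : ℝ =>
        ((s' - c.1) * lam.1 + (x.2 - c.2) * lam.2) /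
          (2 * π * ((s' - c.1) ^ 2 + (x.2 - c.2) ^ 2))) s) x.1
      + deriv (fun s : ℝ => deriv (fun s' : ℝ =>
        ((x.1 - c.1) * lam.1 + (s' - c.2) * lam.2) /
          (2 * π * ((x.1 - c.1) ^ 2 + (s' - c.2) ^ 2))) s) x.2 = 0 := by
  set a := x.1 - c.1
  set b := x.2 - c.2
  have hρ : a ^ 2 + b ^ 2 ≠ 0 := by
    rwa [Ne, add_eq_zero_iff_of_nonneg (sq_nonneg a) (sq_nonneg b), sq_eq_zero_iff,
      sq_eq_zero_iff, sub_eq_zero, sub_eq_zero, ← Prod.ext_iff]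
  have slice₁ : (fun s' => ((s' - c.1) * lam.1 + b * lam.2) / (2 * π * ((s' - c.1) ^ 2 + b ^ 2)))
      = fun s' => (2 * π)⁻¹ * ((lam.1 * (s' - c.1) + b * lam.2) / ((s' - c.1) ^ 2 + b ^ 2)) := by
    funext s'; rw [div_mul_eq_div_div_swap]; ring
  have slice₂ : (fun s' => (a * lam.1 + (s' - c.2) * lam.2) / (2 * π * (a ^ 2 + (s' - c.2) ^ 2)))
      = fun s' => (2 * π)⁻¹ * ((lam.2 * (s' - c.2) + a * lam.1) / ((s' - c.2) ^ 2 + a ^ 2)) := by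
    funext s'; rw [div_mul_eq_div_div_swap]; ring
  rw [slice₁, slice₂,
    deriv_deriv_const_mul_comp_sub_const (fun u => (lam.1 * u + b * lam.2) / (u ^ 2 + b ^ 2)),
    deriv_deriv_const_mul_comp_sub_const (fun u => (lam.2 * u + a * lam.1) / (u ^ 2 + a ^ 2)),
    deriv_deriv_linear_div_sq_add _ _ _ hρ,
    deriv_deriv_linear_div_sq_add _ _ _ (by rwa [add_comm])]
  rw [add_comm (b ^ 2), ← mul_add, ← add_div]
  exact mul_eq_zero_of_right _ (div_eq_zero_iff.mpr (Or.inl (by ring)))
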